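/- arXiv:2405.05754 — 4 statements merged into one kernel-verified Lean document; each statement's English description precedes it below -/
import Mathlib

section
/- If h ≥ (10·ln 40)/19, then for every x with 0 < x ≤ 0.95 one has tanh(h·x) > x; consequently |tanh(h·x)| > |x| for all x with 0 < |x| ≤ 0.95. -/
open Real Set

lemma hasDerivAt_tanh' (x : ℝ) :
    HasDerivAt Real.tanh (1 / Real.cosh x ^ 2) x := by
  have h := (Real.hasDerivAt_sinh x).div (Real.hasDerivAt_cosh x)
    (ne_of_gt (Real.cosh_pos x))
  have : (Real.cosh x * Real.cosh x - Real.sinh x * Real.sinh x) / Real.cosh x ^ 2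
      = 1 / Real.cosh x ^ 2 := by
    rw [show Real.cosh x * Real.cosh x - Real.sinh x * Real.sinh x
        = Real.cosh x ^ 2 - Real.sinh x ^ 2 by ring, Real.cosh_sq_sub_sinh_sq]
  rw [← this]
  exact h.congr_of_eventuallyEq (Filter.Eventually.of_forall fun y =>
    (Real.tanh_eq_sinh_div_cosh y))

lemma tanh_concave : ConcaveOn ℝ (Set.Ici (0:ℝ)) Real.tanh := by
  have hderiv : ∀ x : ℝ, deriv Real.tanh x = 1 / Real.cosh x ^ 2 :=
    fun x => (hasDerivAt_tanh' x).deriv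
  apply AntitoneOn.concaveOn_of_deriv (convex_Ici 0)
  · exact fun x _ => (hasDerivAt_tanh' x).continuousAt.continuousWithinAt
  · exact fun x _ => (hasDerivAt_tanh' x).differentiableAt.differentiableWithinAt
  · intro a ha b hb hab
    rw [interior_Ici] at ha hb
    rw [hderiv, hderiv]
    have h1 : Real.cosh a ≤ Real.cosh b := by
      rw [Real.cosh_le_cosh, abs_of_pos ha, abs_of_pos hb]; exact hab
    have h2 : (0:ℝ) < Real.cosh a := Real.cosh_pos a
    have h3 : (0:ℝ) < Real.cosh b := Real.cosh_pos b
    apply div_le_div_of_nonneg_left one_pos.le (by positivity)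
    nlinarith

lemma tanh_gt_095 {u : ℝ} (hu : u ≥ Real.log 40 / 2) : Real.tanh u > 0.95 := by
  have h40 : (0:ℝ) < 40 := by norm_num
  have hexp : Real.exp (2 * u) ≥ 40 := by
    have : Real.exp (Real.log 40) ≤ Real.exp (2 * u) :=
      Real.exp_le_exp.mpr (by linarith)
    rwa [Real.exp_log h40] at this
  rw [Real.tanh_eq_sinh_div_cosh, gt_iff_lt, lt_div_iff₀ (Real.cosh_pos u),
    Real.sinh_eq, Real.cosh_eq]
  have he : Real.exp u * Real.exp (-u) = 1 := by
    rw [← Real.exp_add]; simp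
  have h2u : Real.exp (2*u) = Real.exp u * Real.exp u := by
    rw [← Real.exp_add]; ring_nf
  have hpos : (0:ℝ) < Real.exp (-u) := Real.exp_pos _
  nlinarith [Real.exp_pos u]

theorem tanh_gt_id_explicit (h : ℝ) (hh : h ≥ 10 * Real.log 40 / 19) :
    (∀ x : ℝ, 0 < x → x ≤ 0.95 → Real.tanh (h * x) > x) ∧
    (∀ x : ℝ, 0 < |x| → |x| ≤ 0.95 → |Real.tanh (h * x)| > |x|) := by
  have hlog : (0:ℝ) < Real.log 40 := Real.log_pos (by norm_num)
  have hpos : (0:ℝ) < h := lt_of_lt_of_le (by positivity) hh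
  have key : ∀ x : ℝ, 0 < x → x ≤ 0.95 → Real.tanh (h * x) > x := by
    intro x hx hx95
    have ht0 : (0:ℝ) ≤ x / 0.95 := by positivity
    have ht1 : x / 0.95 ≤ 1 := by linarith [div_le_one_of_le₀ hx95 (by norm_num : (0:ℝ) ≤ 0.95)]
    -- concavity: tanh (t * y) ≥ t * tanh y with t = x/0.95, y = 0.95 * h
    have hy : (0:ℝ) ≤ 0.95 * h := by positivity
    have hc := tanh_concave.2 (mem_Ici.mpr le_rfl) (mem_Ici.mpr hy)
      (show (0:ℝ) ≤ 1 - x / 0.95 by linarith) ht0 (by ring)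
    rw [Real.tanh_zero] at hc
    have harg : (1 - x / 0.95) • (0:ℝ) + (x / 0.95) • (0.95 * h) = h * x := by
      simp [smul_eq_mul]; ring
    rw [harg] at hc
    have hbig : Real.tanh (0.95 * h) > 0.95 := by
      apply tanh_gt_095
      rw [ge_iff_le, div_le_iff₀ (by norm_num : (0:ℝ) < 2)] at *
      nlinarith
    have : (x / 0.95) * Real.tanh (0.95 * h) > (x / 0.95) * 0.95 := by
      apply mul_lt_mul_of_pos_left hbig (by positivity)
    have hxeq : (x / 0.95) * (0.95:ℝ) = x := by field_simp
    calc x = (x / 0.95) * 0.95 := hxeq.symm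
      _ < (x / 0.95) * Real.tanh (0.95 * h) := this
      _ ≤ Real.tanh (h * x) := by
          calc (x / 0.95) * Real.tanh (0.95 * h)
              = (1 - x / 0.95) * 0 + (x / 0.95) * Real.tanh (0.95 * h) := by ring
            _ ≤ Real.tanh (h * x) := hc
  refine ⟨key, fun x hx hx95 => ?_⟩
  rcases lt_or_gt_of_ne (fun hx0 => by simp [hx0] at hx : x ≠ 0) with hneg | hposx
  · have habs : |x| = -x := abs_of_neg hneg
    rw [habs] at hx95 ⊢
    have := key (-x) (by linarith) hx95
    rw [show h * x = -(h * (-x)) by ring, Real.tanh_neg, abs_neg]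
    calc -x < Real.tanh (h * (-x)) := this
      _ ≤ |Real.tanh (h * (-x))| := le_abs_self _
  · have habs : |x| = x := abs_of_pos hposx
    rw [habs] at hx95 ⊢
    calc x < Real.tanh (h * x) := key x hposx hx95
      _ ≤ |Real.tanh (h * x)| := le_abs_self _
end

section
/- Let α₀ : ℝ → ℝ be locally Lipschitz, strictly monotonically increasing, and satisfy α₀(0) = 0. Let D : [0,∞) → ℝ be differentiable with D'(t) ≥ -α₀(D(t)) for all t ≥ 0 and D(0) > 0. Then D(t) > 0 for all t ≥ 0; i.e., the set {D > 0} is forward invariant. -/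
open Set Filter Topology

/-!
Suppose `D` has a first zero `c > 0`. Just before `c`, `D` is positive and close to `0`, where the
local Lipschitz bound of `α₀` at `α₀ 0 = 0` gives `α₀ (D t) ≤ K * D t`. Hence `D' ≥ -K * D` there,
so `D t * exp (K t)` is nondecreasing on some `[t₀, c]`: it is positive at `t₀` and zero at `c`,
a contradiction.
-/

theorem LocallyLipschitz.exists_eventually_dist_le_mul {X Y : Type*} [PseudoMetricSpace X]
    [PseudoMetricSpace Y] {f : X → Y} (hf : LocallyLipschitz f) (x : X) :
    ∃ K : ℝ, ∀ᶠ y in 𝓝 x, dist (f y) (f x) ≤ K * dist y x := by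
  obtain ⟨K, U, hU, hK⟩ := hf x
  exact ⟨K, eventually_of_mem hU fun y hy => hK.dist_le_mul y hy x (mem_of_mem_nhds hU)⟩

theorem exists_first_zero_of_pos_of_nonpos {D : ℝ → ℝ} {a b : ℝ}
    (hab : a ≤ b) (hD : ContinuousOn D (Icc a b)) (ha : 0 < D a) (hb : D b ≤ 0) :
    ∃ c ∈ Ioc a b, D c = 0 ∧ ∀ t ∈ Ico a c, 0 < D t := by
  set S := Icc a b ∩ D ⁻¹' Iic 0
  have hS : IsCompact S :=
    isCompact_Icc.of_isClosed_subset (hD.preimage_isClosed_of_isClosed isClosed_Icc isClosed_Iic)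
      inter_subset_left
  obtain ⟨c, ⟨⟨hac, hcb⟩, hDc⟩, hleast⟩ := hS.exists_isLeast ⟨b, ⟨hab, le_rfl⟩, hb⟩
  have hpos : ∀ t ∈ Ico a c, 0 < D t := fun t ⟨hat, htc⟩ =>
    lt_of_not_ge fun hDt => (hleast ⟨⟨hat, htc.le.trans hcb⟩, hDt⟩).not_gt htc
  have hac' : a < c := hac.lt_of_ne fun h => (h ▸ hDc : D a ≤ 0).not_gt ha
  obtain ⟨z, ⟨haz, hzc⟩, hDz⟩ :=
    intermediate_value_Icc' hac (hD.mono (Icc_subset_Icc_right hcb)) ⟨hDc, ha.le⟩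
  have hzc' : z = c := le_antisymm hzc (hleast ⟨⟨haz, hzc.trans hcb⟩, hDz.le⟩)
  exact ⟨c, ⟨hac', hcb⟩, hzc' ▸ hDz, hpos⟩

theorem monotoneOn_mul_exp_of_neg_mul_le_deriv {D D' : ℝ → ℝ} {K a b : ℝ}
    (hcont : ContinuousOn D (Icc a b)) (hD : ∀ t ∈ Ioo a b, HasDerivAt D (D' t) t)
    (hD' : ∀ t ∈ Ioo a b, -(K * D t) ≤ D' t) :
    MonotoneOn (fun t => D t * Real.exp (K * t)) (Icc a b) := by
  have hexp (t : ℝ) : HasDerivAt (fun t => Real.exp (K * t)) (Real.exp (K * t) * K) t := by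
    simpa using ((hasDerivAt_id t).const_mul K).exp
  refine monotoneOn_of_hasDerivWithinAt_nonneg (convex_Icc a b)
    (hcont.mul (by fun_prop)) (f' := fun t => (D' t + K * D t) * Real.exp (K * t)) ?_ ?_
  · intro t ht
    rw [interior_Icc] at ht
    exact (((hD t ht).mul (hexp t)).congr_deriv (by ring)).hasDerivWithinAt
  · intro t ht
    rw [interior_Icc] at ht
    have := hD' t ht
    exact mul_nonneg (by linarith) (Real.exp_pos _).le

theorem cbf_forward_invariance_general
    (α₀ : ℝ → ℝ) (hLip : LocallyLipschitz α₀)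
    (hzero : α₀ 0 = 0)
    (D D' : ℝ → ℝ)
    (hderiv : ∀ t : ℝ, 0 ≤ t → HasDerivAt D (D' t) t)
    (hineq : ∀ t : ℝ, 0 ≤ t → D' t ≥ -α₀ (D t))
    (hD0 : D 0 > 0) :
    ∀ t : ℝ, 0 ≤ t → D t > 0 := by
  intro s hs
  by_contra! hDs
  have hcont : ContinuousOn D (Ici 0) := fun t ht =>
    (hderiv t ht).continuousAt.continuousWithinAt
  obtain ⟨c, ⟨hc, -⟩, hDc, hpos⟩ :=
    exists_first_zero_of_pos_of_nonpos hs (hcont.mono Icc_subset_Ici_self) hD0 hDs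
  obtain ⟨K, hK⟩ := hLip.exists_eventually_dist_le_mul 0
  have hnear : ∀ᶠ t in 𝓝[<] c, 0 < t ∧ α₀ (D t) ≤ K * D t := by
    have hDt : Tendsto D (𝓝[<] c) (𝓝 0) :=
      hDc ▸ (hderiv c hc.le).continuousAt.tendsto.mono_left nhdsWithin_le_nhds
    filter_upwards [Ioo_mem_nhdsLT hc, hDt.eventually hK] with t ht hKt
    rw [Real.dist_eq, Real.dist_eq, hzero, sub_zero, sub_zero,
      abs_of_pos (hpos t ⟨ht.1.le, ht.2⟩)] at hKt
    exact ⟨ht.1, (le_abs_self _).trans hKt⟩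
  obtain ⟨l, hlc, hl⟩ := mem_nhdsLT_iff_exists_Ioo_subset.mp hnear
  obtain ⟨t₀, hlt₀, ht₀c⟩ := exists_between (mem_Iio.1 hlc)
  have hsub : Ioo t₀ c ⊆ Ioo l c := Ioo_subset_Ioo_left hlt₀.le
  have ht₀ : 0 < t₀ := (hl ⟨hlt₀, ht₀c⟩).1
  have hmono := monotoneOn_mul_exp_of_neg_mul_le_deriv (K := K)
    (hcont.mono fun t ht => ht₀.le.trans ht.1)
    (fun t ht => hderiv t (ht₀.le.trans ht.1.le))
    (fun t ht => by linarith [hineq t (ht₀.le.trans ht.1.le), (hl (hsub ht)).2])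
  have hle := hmono (left_mem_Icc.2 ht₀c.le) (right_mem_Icc.2 ht₀c.le) ht₀c.le
  simp only [hDc, zero_mul] at hle
  exact hle.not_gt (mul_pos (hpos t₀ ⟨ht₀.le, ht₀c⟩) (Real.exp_pos _))

theorem cbf_forward_invariance
    (α₀ : ℝ → ℝ) (hLip : LocallyLipschitz α₀) (hMono : StrictMono α₀)
    (hzero : α₀ 0 = 0)
    (D D' : ℝ → ℝ)
    (hderiv : ∀ t : ℝ, 0 ≤ t → HasDerivAt D (D' t) t)
    (hineq : ∀ t : ℝ, 0 ≤ t → D' t ≥ -α₀ (D t))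
    (hD0 : D 0 > 0) :
    ∀ t : ℝ, 0 ≤ t → D t > 0 :=
  cbf_forward_invariance_general α₀ hLip hzero D D' hderiv hineq hD0
end

section
/- Let α > 0, m ∈ ℝ, n ≥ 0, and let f : [0,∞) → ℝ be differentiable with f'(t) ≥ -α·f(t) + m - n·exp(-α·t) for all t ≥ 0. Then for all t ≥ 0: f(t) ≥ f(0)·exp(-α·t) + (m/α)·(1 - exp(-α·t)) - n·t·exp(-α·t), and consequently f(t) ≥ f(0)·exp(-α·t) + (m/α)·(1 - exp(-α·t)) - n/(α·e), where e is Euler's number. -/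
/-!
With the integrating factor `e^{α t}`, any two functions with `u' + α u ≤ f' + α f` have
`(f - u) e^{α t}` nondecreasing, so `u ≤ f` persists from `t = 0`. Comparing `f` with the solution
of the equality case, `f(0) e^{-α t} + (m/α)(1 - e^{-α t}) - n t e^{-α t}`, gives the first bound;
the second follows from `x e^{-x} ≤ e^{-1}` at `x = α t`.
-/

open Real Set

theorem le_of_hasDerivAt_add_mul_le {α a : ℝ} {f f' u u' : ℝ → ℝ}
    (hf : ∀ t, a ≤ t → HasDerivAt f (f' t) t) (hu : ∀ t, a ≤ t → HasDerivAt u (u' t) t)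
    (hle : ∀ t, a ≤ t → u' t + α * u t ≤ f' t + α * f t) (h₀ : u a ≤ f a) :
    ∀ t, a ≤ t → u t ≤ f t := by
  intro t ht
  set w : ℝ → ℝ := fun s => (f s - u s) * exp (α * s)
  have hw : ∀ s, a ≤ s →
      HasDerivAt w ((f' s + α * f s - (u' s + α * u s)) * exp (α * s)) s := by
    intro s hs
    have hexp : HasDerivAt (fun s => exp (α * s)) (exp (α * s) * α) s :=
      ((hasDerivAt_id s).const_mul α).exp.congr_deriv (by simp)
    exact (((hf s hs).sub (hu s hs)).mul hexp).congr_deriv (by simp only [Pi.sub_apply]; ring)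
  have hmono : MonotoneOn w (Ici a) := by
    refine monotoneOn_of_hasDerivWithinAt_nonneg (convex_Ici a)
      (fun s hs => (hw s hs).continuousAt.continuousWithinAt)
      (fun s hs => (hw s (interior_subset hs)).hasDerivWithinAt) fun s hs => ?_
    exact mul_nonneg (sub_nonneg.2 (hle s (interior_subset hs))) (exp_pos _).le
  have hw₀ : 0 ≤ w a := mul_nonneg (sub_nonneg.2 h₀) (exp_pos _).le
  have hwt : 0 ≤ w t := hw₀.trans (hmono self_mem_Ici ht ht)
  exact sub_nonneg.1 (nonneg_of_mul_nonneg_left hwt (exp_pos _))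

noncomputable def resonantSolution (α m n x₀ t : ℝ) : ℝ :=
  x₀ * exp (-α * t) + m / α * (1 - exp (-α * t)) - n * t * exp (-α * t)

theorem resonantSolution_zero (α m n x₀ : ℝ) : resonantSolution α m n x₀ 0 = x₀ := by
  simp [resonantSolution]

theorem hasDerivAt_resonantSolution {α : ℝ} (hα : α ≠ 0) (m n x₀ t : ℝ) :
    HasDerivAt (resonantSolution α m n x₀)
      (-α * resonantSolution α m n x₀ t + m - n * exp (-α * t)) t := by
  have hexp : HasDerivAt (fun t => exp (-α * t)) (exp (-α * t) * -α) t :=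
    ((hasDerivAt_id t).const_mul (-α)).exp.congr_deriv (by simp)
  refine (((hexp.const_mul x₀).add ((hexp.const_sub 1).const_mul (m / α))).sub
    (((hasDerivAt_id' t).const_mul n).mul hexp)).congr_deriv ?_
  simp only [resonantSolution]
  field_simp
  ring

theorem mul_mul_exp_neg_mul_le {α n : ℝ} (hα : 0 < α) (hn : 0 ≤ n) (t : ℝ) :
    n * t * exp (-α * t) ≤ n / (α * exp 1) :=
  calc n * t * exp (-α * t) = n / α * (α * t * exp (-(α * t))) := by field_simp
    _ ≤ n / α * exp (-1) := by
        gcongr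
        exact mul_exp_neg_le_exp_neg_one (α * t)
    _ = n / (α * exp 1) := by rw [exp_neg]; field_simp

theorem comparison_resonant_case
    (α m n : ℝ) (hα : 0 < α) (hn : 0 ≤ n)
    (f f' : ℝ → ℝ)
    (hderiv : ∀ t : ℝ, 0 ≤ t → HasDerivAt f (f' t) t)
    (hineq : ∀ t : ℝ, 0 ≤ t → f' t ≥ -α * f t + m - n * Real.exp (-α * t)) :
    ∀ t : ℝ, 0 ≤ t →
      (f t ≥ f 0 * Real.exp (-α * t) + (m / α) * (1 - Real.exp (-α * t))
            - n * t * Real.exp (-α * t)) ∧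
      (f t ≥ f 0 * Real.exp (-α * t) + (m / α) * (1 - Real.exp (-α * t))
            - n / (α * Real.exp 1)) := by
  intro t ht
  have hcomp : resonantSolution α m n (f 0) t ≤ f t :=
    le_of_hasDerivAt_add_mul_le (α := α) hderiv
      (fun s _ => hasDerivAt_resonantSolution hα.ne' m n (f 0) s)
      (fun s hs => by linarith [hineq s hs]) (resonantSolution_zero α m n (f 0)).le t ht
  refine ⟨hcomp, le_trans ?_ hcomp⟩
  simp only [resonantSolution]
  linarith [mul_mul_exp_neg_mul_le hα hn t]
end

section
/- Let α, γ, m, n > 0 with γ ≠ 2α, let T_h ≥ 0, and let f : [0,∞) → ℝ be differentiable such that f'(t) ≥ -α·f(t) + m - n·exp(-γ·t/2) for t ∈ [0, T_h] and f'(t) ≥ -α·f(t) + m for t ≥ T_h. Define t* = ln(γ/(2α))/(γ/2 - α), 𝒢_B = (n/(α - γ/2))·(exp(-γ·t*/2) - exp(-α·t*)), and ℋ_B = f(0)·exp(-α·T_h) + (m/α)·(1 - exp(-α·T_h)) - 𝒢_B. If ℋ_B ≤ 0, then f(t) > 0 for every t > T_h + T_{H2}, where T_{H2} = (1/α)·ln(α·|ℋ_B|/m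 + 1). -/
lemma amgm_exp (a b s : ℝ) (hb : 0 < b) (hab : b < a) :
    a * Real.exp (-(b*s)) - b * Real.exp (-(a*s)) ≤ a - b := by
  have ha : 0 < a := hb.trans hab
  have hw2 : (0:ℝ) ≤ b/a := by positivity
  have hw1 : (0:ℝ) ≤ 1 - b/a := by
    rw [sub_nonneg, div_le_one ha]; exact hab.le
  have h := Real.geom_mean_le_arith_mean2_weighted hw1 hw2 zero_le_one
    (Real.exp_nonneg (-(a*s))) (by ring)
  rw [Real.one_rpow, one_mul, ← Real.exp_mul] at h
  have hx : -(a*s) * (b/a) = -(b*s) := by field_simp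
  rw [hx] at h
  have h2 := mul_le_mul_of_nonneg_left h ha.le
  have hexp : a * ((1 - b/a)*1 + b/a * Real.exp (-(a*s))) = a - b + b * Real.exp (-(a*s)) := by
    field_simp
  linarith

lemma transient_le (a b n T : ℝ) (hb : 0 < b) (hab : b < a) (hn : 0 < n) :
    (n/(a-b)) * (Real.exp (-(b*T)) - Real.exp (-(a*T))) ≤
    (n/(a-b)) * (Real.exp (-(b*(Real.log (b/a)/(b-a)))) -
      Real.exp (-(a*(Real.log (b/a)/(b-a))))) := by
  have ha : 0 < a := hb.trans hab
  set ts := Real.log (b/a)/(b-a) with hts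
  have hba : b - a ≠ 0 := by linarith
  have hstar : Real.exp ((b-a)*ts) = b/a := by
    rw [hts, mul_div_cancel₀ _ hba, Real.exp_log (by positivity)]
  have hkey : Real.exp (-(a*ts)) = (b/a) * Real.exp (-(b*ts)) := by
    rw [← hstar, ← Real.exp_add]; ring_nf
  have h := amgm_exp a b (T - ts) hb hab
  have hE := Real.exp_pos (-(b*ts))
  have h2 := mul_le_mul_of_nonneg_right h hE.le
  have e1 : Real.exp (-(b*(T - ts))) * Real.exp (-(b*ts)) = Real.exp (-(b*T)) := by
    rw [← Real.exp_add]; ring_nf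
  have e2 : Real.exp (-(a*(T - ts))) * Real.exp (-(b*ts)) = Real.exp (-(a*T)) * (a/b) := by
    rw [hkey] at *
    rw [← Real.exp_add]
    have : Real.exp (-(a*T)) * (a/b) = Real.exp (-(a*T)) * Real.exp ((a-b)*ts) := by
      congr 1
      have : Real.exp ((a-b)*ts) = (Real.exp ((b-a)*ts))⁻¹ := by
        rw [← Real.exp_neg]; ring_nf
      rw [this, hstar]
      field_simp
    rw [this, ← Real.exp_add]; ring_nf
  have h3 : a * Real.exp (-(b*T)) - a * Real.exp (-(a*T)) ≤ (a-b) * Real.exp (-(b*ts)) := by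
    have expand : (a * Real.exp (-(b*(T - ts))) - b * Real.exp (-(a*(T - ts)))) * Real.exp (-(b*ts))
        = a * Real.exp (-(b*T)) - b * (Real.exp (-(a*T)) * (a/b)) := by
      rw [← e1, ← e2]; ring
    have hb' : b * (Real.exp (-(a*T)) * (a/b)) = a * Real.exp (-(a*T)) := by
      field_simp
    nlinarith [h2]
  have hRHS : (n/(a-b)) * (Real.exp (-(b*ts)) - Real.exp (-(a*ts))) = n * Real.exp (-(b*ts)) / a := by
    have hane : a ≠ 0 := ha.ne'
    have habne : a - b ≠ 0 := by linarith
    rw [hkey]; field_simp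
  rw [hRHS]
  rw [div_mul_eq_mul_div, div_le_div_iff₀ (by linarith) ha]
  nlinarith [h3, hn]

set_option maxHeartbeats 1000000

theorem worst_case_recovery
    (α γ m n : ℝ) (hα : 0 < α) (hγ : 0 < γ) (hm : 0 < m) (hn : 0 < n)
    (hne : γ ≠ 2 * α)
    (Th : ℝ) (hTh : 0 ≤ Th)
    (f f' : ℝ → ℝ)
    (hderiv : ∀ t : ℝ, 0 ≤ t → HasDerivAt f (f' t) t)
    (hineq1 : ∀ t : ℝ, t ∈ Set.Icc 0 Th → f' t ≥ -α * f t + m - n * Real.exp (-γ * t / 2))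
    (hineq2 : ∀ t : ℝ, Th ≤ t → f' t ≥ -α * f t + m) :
    let tstar := Real.log (γ / (2 * α)) / (γ / 2 - α)
    let GB := (n / (α - γ / 2)) * (Real.exp (-γ * tstar / 2) - Real.exp (-α * tstar))
    let HB := f 0 * Real.exp (-α * Th) + (m / α) * (1 - Real.exp (-α * Th)) - GB
    HB ≤ 0 →
      ∀ t : ℝ, t > Th + (1 / α) * Real.log (α * |HB| / m + 1) → f t > 0 := by
  intro tstar GB HB hHB t ht
  have hα' : α ≠ 0 := hα.ne'
  have hγ' : γ ≠ 0 := hγ.ne'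
  set c := n/(α-γ/2) with hc
  -- Step A: GB bounds the transient at Th
  have hGB : c * (Real.exp (-γ*Th/2) - Real.exp (-α*Th)) ≤ GB := by
    have hGBdef : GB = c * (Real.exp (-γ*tstar/2) - Real.exp (-α*tstar)) := rfl
    rcases lt_or_gt_of_ne (show γ/2 ≠ α from fun h => hne (by linarith)) with hcase | hcase
    · have h := transient_le α (γ/2) n Th (by linarith) hcase hn
      have hts : Real.log ((γ/2)/α)/((γ/2)-α) = tstar := by
        rw [show (γ/2)/α = γ/(2*α) by ring]
      rw [hts] at h
      calc c * (Real.exp (-γ*Th/2) - Real.exp (-α*Th))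
          = (n/(α-γ/2)) * (Real.exp (-(γ/2*Th)) - Real.exp (-(α*Th))) := by
            rw [hc]; ring_nf
        _ ≤ (n/(α-γ/2)) * (Real.exp (-(γ/2*tstar)) - Real.exp (-(α*tstar))) := h
        _ = GB := by rw [hGBdef, hc]; ring_nf
    · have h := transient_le (γ/2) α n Th hα hcase hn
      have hts : Real.log (α/(γ/2))/(α-(γ/2)) = tstar := by
        have h1 : α/(γ/2) = (γ/(2*α))⁻¹ := by field_simp
        rw [h1, Real.log_inv]
        show -Real.log (γ/(2*α)) / (α - γ/2) = Real.log (γ/(2*α)) / (γ/2 - α)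
        rw [show α - γ/2 = -(γ/2 - α) from by ring, neg_div_neg_eq]
      rw [hts] at h
      have hcneg : c = -(n/(γ/2-α)) := by
        rw [hc, show α - γ/2 = -(γ/2 - α) from by ring, div_neg]
      calc c * (Real.exp (-γ*Th/2) - Real.exp (-α*Th))
          = (n/(γ/2-α)) * (Real.exp (-(α*Th)) - Real.exp (-(γ/2*Th))) := by
            rw [hcneg]; ring_nf
        _ ≤ (n/(γ/2-α)) * (Real.exp (-(α*tstar)) - Real.exp (-(γ/2*tstar))) := h
        _ = GB := by rw [hGBdef, hcneg]; ring_nf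
  -- common derivative facts
  have hexp : ∀ s : ℝ, HasDerivAt (fun r => Real.exp (α*r)) (α * Real.exp (α*s)) s := by
    intro s; simpa [mul_comm] using ((hasDerivAt_id s).const_mul α).exp
  have hexpb : ∀ s : ℝ, HasDerivAt (fun r => Real.exp ((α-γ/2)*r)) ((α-γ/2) * Real.exp ((α-γ/2)*s)) s := by
    intro s; simpa [mul_comm] using ((hasDerivAt_id s).const_mul (α-γ/2)).exp
  -- Step B: f Th ≥ HB via monotonicity of u on [0, Th]
  set u : ℝ → ℝ := fun s => f s * Real.exp (α*s) - (m/α)*Real.exp (α*s)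
      + c*Real.exp ((α-γ/2)*s) with hu
  have hud : ∀ s : ℝ, 0 ≤ s → HasDerivAt u
      (f' s * Real.exp (α*s) + f s * (α * Real.exp (α*s)) - (m/α) * (α * Real.exp (α*s))
        + c * ((α-γ/2) * Real.exp ((α-γ/2)*s))) s := by
    intro s hs
    exact (((hderiv s hs).mul (hexp s)).sub ((hexp s).const_mul (m/α))).add
      ((hexpb s).const_mul c)
  have humono : MonotoneOn u (Set.Icc 0 Th) := by
    apply monotoneOn_of_deriv_nonneg (convex_Icc 0 Th)
    · intro s hs; exact (hud s hs.1).continuousAt.continuousWithinAt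
    · rw [interior_Icc]; intro s hs
      exact (hud s hs.1.le).differentiableAt.differentiableWithinAt
    · rw [interior_Icc]; intro s hs
      rw [(hud s hs.1.le).deriv]
      have h1 := hineq1 s ⟨hs.1.le, hs.2.le⟩
      have e1 : Real.exp ((α-γ/2)*s) = Real.exp (α*s) * Real.exp (-γ*s/2) := by
        rw [← Real.exp_add]; ring_nf
      have hne' : α - γ/2 ≠ 0 := fun h => hne (by linarith)
      have hcc : c * ((α-γ/2) * Real.exp ((α-γ/2)*s)) = n * (Real.exp (α*s) * Real.exp (-γ*s/2)) := by
        rw [e1, hc]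
        rw [show n/(α-γ/2) * ((α-γ/2) * (Real.exp (α*s) * Real.exp (-γ*s/2)))
            = n * (Real.exp (α*s) * Real.exp (-γ*s/2)) * ((α-γ/2)/(α-γ/2)) from by ring,
          div_self hne', mul_one]
      have hmm : (m/α) * (α * Real.exp (α*s)) = m * Real.exp (α*s) := by
        field_simp
      rw [hcc, hmm]
      have hE := Real.exp_pos (α*s)
      have hE2 := Real.exp_pos (-γ*s/2)
      nlinarith [mul_le_mul_of_nonneg_right (sub_nonneg.mpr h1.le) hE.le]
  have hu0 : u 0 ≤ u Th := humono (Set.left_mem_Icc.mpr hTh) (Set.right_mem_Icc.mpr hTh) hTh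
  have hfTh : HB ≤ f Th := by
    have hu0' : f 0 - m/α + c ≤ f Th * Real.exp (α*Th) - (m/α)*Real.exp (α*Th)
        + c*Real.exp ((α-γ/2)*Th) := by
      have e0 : u 0 = f 0 - m/α + c := by simp [hu]
      rw [e0] at hu0; exact hu0
    have hE' := Real.exp_pos (-α*Th)
    have hmul := mul_le_mul_of_nonneg_right hu0' hE'.le
    have hEE : Real.exp (α*Th) * Real.exp (-α*Th) = 1 := by
      rw [← Real.exp_add]; norm_num
    have hEb : Real.exp ((α-γ/2)*Th) * Real.exp (-α*Th) = Real.exp (-γ*Th/2) := by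
      rw [← Real.exp_add]; ring_nf
    have hRHS : (f Th * Real.exp (α*Th) - (m/α)*Real.exp (α*Th)
        + c*Real.exp ((α-γ/2)*Th)) * Real.exp (-α*Th)
        = f Th - m/α + c*Real.exp (-γ*Th/2) := by
      calc (f Th * Real.exp (α*Th) - (m/α)*Real.exp (α*Th)
            + c*Real.exp ((α-γ/2)*Th)) * Real.exp (-α*Th)
          = (f Th - m/α) * (Real.exp (α*Th) * Real.exp (-α*Th))
            + c * (Real.exp ((α-γ/2)*Th) * Real.exp (-α*Th)) := by ring
        _ = f Th - m/α + c*Real.exp (-γ*Th/2) := by rw [hEE, hEb]; ring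
    rw [hRHS] at hmul
    have hHBdef : HB = f 0 * Real.exp (-α*Th) + (m/α) * (1 - Real.exp (-α*Th)) - GB := rfl
    rw [hHBdef]
    nlinarith [hGB, hmul]
  clear_value tstar GB HB
  -- Step C: monotonicity of v on [Th, t]
  have hK1 : (0:ℝ) < α * |HB| / m + 1 := by positivity
  have hTH2 : 0 ≤ (1/α) * Real.log (α*|HB|/m + 1) := by
    apply mul_nonneg (by positivity)
    apply Real.log_nonneg
    have : 0 ≤ α * |HB| / m := by positivity
    linarith
  have htTh : Th ≤ t := by linarith
  set v : ℝ → ℝ := fun s => f s * Real.exp (α*s) - (m/α)*Real.exp (α*s) with hv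
  have hvd : ∀ s : ℝ, 0 ≤ s → HasDerivAt v
      (f' s * Real.exp (α*s) + f s * (α * Real.exp (α*s)) - (m/α) * (α * Real.exp (α*s))) s := by
    intro s hs
    exact ((hderiv s hs).mul (hexp s)).sub ((hexp s).const_mul (m/α))
  have hvmono : MonotoneOn v (Set.Icc Th t) := by
    apply monotoneOn_of_deriv_nonneg (convex_Icc Th t)
    · intro s hs; exact (hvd s (hTh.trans hs.1)).continuousAt.continuousWithinAt
    · rw [interior_Icc]; intro s hs
      exact (hvd s (hTh.trans hs.1.le)).differentiableAt.differentiableWithinAt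
    · rw [interior_Icc]; intro s hs
      rw [(hvd s (hTh.trans hs.1.le)).deriv]
      have h2 := hineq2 s hs.1.le
      have hmm : (m/α) * (α * Real.exp (α*s)) = m * Real.exp (α*s) := by field_simp
      rw [hmm]
      have hE := Real.exp_pos (α*s)
      nlinarith [mul_le_mul_of_nonneg_right (sub_nonneg.mpr h2.le) hE.le]
  have hvTt : v Th ≤ v t := hvmono (Set.left_mem_Icc.mpr htTh) (Set.right_mem_Icc.mpr htTh) htTh
  -- Step D: final arithmetic
  set A := Real.exp (α*Th) with hA
  set B := Real.exp (α*t) with hB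
  set E := Real.exp (α*(t-Th)) with hE
  have hApos : 0 < A := Real.exp_pos _
  have hBpos : 0 < B := Real.exp_pos _
  have hEpos : 0 < E := Real.exp_pos _
  have hBAE : B = A * E := by rw [hA, hB, hE, ← Real.exp_add]; ring_nf
  have hKlt : α * |HB| / m + 1 < E := by
    have h1 : Real.log (α*|HB|/m + 1) < α * (t - Th) := by
      have h2 : (1/α) * Real.log (α*|HB|/m + 1) < t - Th := by linarith
      calc Real.log (α*|HB|/m + 1) = α * ((1/α) * Real.log (α*|HB|/m + 1)) := by
            field_simp
        _ < α * (t - Th) := by exact mul_lt_mul_of_pos_left h2 hα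
    calc α * |HB| / m + 1 = Real.exp (Real.log (α*|HB|/m + 1)) := (Real.exp_log hK1).symm
      _ < E := Real.exp_lt_exp.mpr h1
  have habs : |HB| = -HB := abs_of_nonpos hHB
  have hvTt' : f Th * A - (m/α)*A ≤ f t * B - (m/α)*B := hvTt
  have hThA : HB * A ≤ f Th * A := mul_le_mul_of_nonneg_right hfTh hApos.le
  have hmB : (m/α)*B = (m/α)*A*E := by rw [hBAE]; ring
  have hprod : (m/α)*A*(α*|HB|/m + 1) < (m/α)*A*E := by
    apply mul_lt_mul_of_pos_left hKlt (by positivity)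
  have hsimp : (m/α)*A*(α*|HB|/m + 1) = |HB| * A + m/α * A := by
    field_simp
  have h5 : 0 < f t * B := by
    rw [hsimp, habs] at hprod
    linarith
  nlinarith [h5, hBpos]
end
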